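/- arXiv:2507.15682 — 2 statements merged into one kernel-verified Lean document; each statement's English description precedes it below -/
import Mathlib

section
/- For d ∈ [0, 1), the set of offers s ∈ S that maximize π(·, H, d) over S is exactly the two-element set {((1+d)/2, (1−d)/2, 0), ((1+d)/2, 0, (1−d)/2)}; in particular the maximal expected payoff equals d + (1−d)²/(4·τ̄). -/
open MeasureTheory Filter

noncomputable section

/-- The unit simplex of offers `(s_A, s_B, s_C)`. -/
def SimplexS : Set (ℝ × ℝ × ℝ) :=
  {s | 0 ≤ s.1 ∧ 0 ≤ s.2.1 ∧ 0 ≤ s.2.2 ∧ s.1 + s.2.1 + s.2.2 = 1}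

/-- Acceptance probability `Λ(b, c, G) = G({(τB, τC) : τB ≤ b or τC ≤ c})`. -/
def Lam (b c : ℝ) (G : Measure (ℝ × ℝ)) : ℝ :=
  (G {p : ℝ × ℝ | p.1 ≤ b ∨ p.2 ≤ c}).toReal

/-- Joint CDF `G(x, y) = G((−∞, x] × (−∞, y])`. -/
def jointCDF (G : Measure (ℝ × ℝ)) (x y : ℝ) : ℝ :=
  (G (Set.Iic x ×ˢ Set.Iic y)).toReal

/-- Proposer's expected payoff `π(s, G, d) = d + (s_A − d)·Λ(s_B, s_C, G)`. -/
def pay (s : ℝ × ℝ × ℝ) (G : Measure (ℝ × ℝ)) (d : ℝ) : ℝ :=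
  d + (s.1 - d) * Lam s.2.1 s.2.2 G

/-- Modified payoff `π̂(s, G, d) = d + max{s_A − d, 0}·Λ(s_B, s_C, G)`. -/
def payHat (s : ℝ × ℝ × ℝ) (G : Measure (ℝ × ℝ)) (d : ℝ) : ℝ :=
  d + max (s.1 - d) 0 * Lam s.2.1 s.2.2 G

/-- The uniform distribution on `[0, τ]`. -/
def uniformIcc (τ : ℝ) : Measure ℝ :=
  (ENNReal.ofReal τ)⁻¹ • volume.restrict (Set.Icc 0 τ)

/-- Weak convergence of measures: convergence of integrals of all bounded continuous
functions. -/
def WeakLim (Hn : ℕ → Measure (ℝ × ℝ)) (H : Measure (ℝ × ℝ)) : Prop :=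
  ∀ f : BoundedContinuousFunction (ℝ × ℝ) ℝ,
    Tendsto (fun n => ∫ p, f p ∂(Hn n)) atTop (nhds (∫ p, f p ∂H))


/-!
With uniform marginals on `[0, τ]`, inclusion–exclusion gives
`Λ(b, c) = b/τ + c/τ - H(b, c) ≤ (1 - s_A)/τ` on the simplex, so the payoff is at most
`d + (s_A - d)(1 - s_A)/τ ≤ d + (1 - d)²/(4τ)` by AM–GM. Equality forces `s_A = (1 + d)/2` and
`H(s_B, s_C) = 0`, and by Assumption 1 the latter only happens when `s_B = 0` or `s_C = 0`.
-/

lemma uniformIcc_Iic {τ : ℝ} (hτ : 0 < τ) (b : ℝ) :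
    uniformIcc τ (Set.Iic b) = ENNReal.ofReal (min b τ / τ) := by
  have hIcc : Set.Iic b ∩ Set.Icc 0 τ = Set.Icc 0 (min b τ) := by
    ext x
    simp only [Set.mem_inter_iff, Set.mem_Iic, Set.mem_Icc, le_min_iff]
    tauto
  rw [uniformIcc, Measure.smul_apply, Measure.restrict_apply measurableSet_Iic, hIcc,
    Real.volume_Icc, ENNReal.ofReal_div_of_pos hτ, smul_eq_mul, sub_zero, div_eq_mul_inv,
    mul_comm]

lemma measure_preimage_Iic_of_map_eq_uniformIcc {α : Type*} [MeasurableSpace α]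
    {μ : Measure α} {f : α → ℝ} {τ b : ℝ} (hf : Measurable f) (hμ : μ.map f = uniformIcc τ)
    (hτ : 0 < τ) (hb : 0 ≤ b) :
    (μ (f ⁻¹' Set.Iic b)).toReal = min b τ / τ := by
  rw [← Measure.map_apply hf measurableSet_Iic, hμ, uniformIcc_Iic hτ,
    ENNReal.toReal_ofReal (by positivity)]

section JointLaw

variable {G : Measure (ℝ × ℝ)}

lemma jointCDF_nonneg (x y : ℝ) : 0 ≤ jointCDF G x y := ENNReal.toReal_nonneg

variable [IsFiniteMeasure G]

lemma lam_add_jointCDF (b c : ℝ) :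
    Lam b c G + jointCDF G b c =
      (G (Prod.fst ⁻¹' Set.Iic b)).toReal + (G (Prod.snd ⁻¹' Set.Iic c)).toReal := by
  have hunion := measure_union_add_inter (μ := G) (Prod.fst ⁻¹' Set.Iic b)
    (measurable_snd measurableSet_Iic : MeasurableSet (Prod.snd ⁻¹' Set.Iic c))
  rw [← Set.prod_eq] at hunion
  rw [Lam, jointCDF, ← ENNReal.toReal_add (measure_ne_top G _) (measure_ne_top G _),
    ← ENNReal.toReal_add (measure_ne_top G _) (measure_ne_top G _)]
  exact congrArg ENNReal.toReal hunion

lemma jointCDF_mono {x y x' y' : ℝ} (hx : x ≤ x') (hy : y ≤ y') :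
    jointCDF G x y ≤ jointCDF G x' y' :=
  ENNReal.toReal_mono (measure_ne_top G _)
    (measure_mono (Set.prod_mono (Set.Iic_subset_Iic.2 hx) (Set.Iic_subset_Iic.2 hy)))

lemma jointCDF_le_fst (x y : ℝ) : jointCDF G x y ≤ (G (Prod.fst ⁻¹' Set.Iic x)).toReal :=
  ENNReal.toReal_mono (measure_ne_top G _) (measure_mono fun _ hp => hp.1)

lemma jointCDF_le_snd (x y : ℝ) : jointCDF G x y ≤ (G (Prod.snd ⁻¹' Set.Iic y)).toReal :=
  ENNReal.toReal_mono (measure_ne_top G _) (measure_mono fun _ hp => hp.2)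

end JointLaw

lemma sub_mul_le_of_le_div {τ a d L : ℝ} (hτ : 0 < τ) (hL0 : 0 ≤ L)
    (hL : L ≤ (1 - a) / τ) : (a - d) * L ≤ (1 - d) ^ 2 / (4 * τ) := by
  rcases le_or_gt a d with had | had
  · have : (a - d) * L ≤ 0 := mul_nonpos_of_nonpos_of_nonneg (by linarith) hL0
    linarith [show 0 ≤ (1 - d) ^ 2 / (4 * τ) by positivity]
  · calc (a - d) * L ≤ (a - d) * ((1 - a) / τ) := by gcongr
      _ ≤ (1 - d) ^ 2 / (4 * τ) := by
        rw [← mul_div_assoc, div_le_div_iff₀ hτ (by positivity)]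
        nlinarith [mul_nonneg hτ.le (sq_nonneg (2 * a - 1 - d))]

lemma eq_of_sub_mul_eq {τ a d L : ℝ} (hτ : 0 < τ) (hd : d < 1) (hL0 : 0 ≤ L)
    (hL : L ≤ (1 - a) / τ) (h : (a - d) * L = (1 - d) ^ 2 / (4 * τ)) :
    a = (1 + d) / 2 ∧ L = (1 - a) / τ := by
  have hpos : 0 < (1 - d) ^ 2 / (4 * τ) := by
    have : 0 < 1 - d := by linarith
    positivity
  have had : d < a := by
    by_contra! had
    nlinarith [mul_nonneg (sub_nonneg.2 had) hL0]
  have hle : (1 - d) ^ 2 / (4 * τ) ≤ (a - d) * (1 - a) / τ := by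
    rw [← h, mul_div_assoc]; gcongr
  rw [div_le_div_iff₀ (by positivity) hτ] at hle
  have hsq : τ * (2 * a - 1 - d) ^ 2 ≤ 0 := by nlinarith
  have ha : a = (1 + d) / 2 := by
    have := pow_eq_zero_iff two_ne_zero |>.1 <|
      le_antisymm (nonpos_of_mul_nonpos_right hsq hτ) (sq_nonneg _)
    linarith
  refine ⟨ha, mul_left_cancel₀ (sub_pos.2 had).ne' ?_⟩
  rw [h, ha]
  field_simp
  ring

section UniformMarginals

variable {τ : ℝ} {H : Measure (ℝ × ℝ)} [IsFiniteMeasure H]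

lemma lam_add_jointCDF_of_marginals (hτ : 0 < τ) (hmarg1 : H.map Prod.fst = uniformIcc τ)
    (hmarg2 : H.map Prod.snd = uniformIcc τ) {b c : ℝ} (hb : 0 ≤ b) (hc : 0 ≤ c) :
    Lam b c H + jointCDF H b c = min b τ / τ + min c τ / τ := by
  rw [lam_add_jointCDF, measure_preimage_Iic_of_map_eq_uniformIcc measurable_fst hmarg1 hτ hb,
    measure_preimage_Iic_of_map_eq_uniformIcc measurable_snd hmarg2 hτ hc]

lemma lam_le (hτ : 0 < τ) (hmarg1 : H.map Prod.fst = uniformIcc τ)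
    (hmarg2 : H.map Prod.snd = uniformIcc τ) {b c : ℝ} (hb : 0 ≤ b) (hc : 0 ≤ c) :
    Lam b c H ≤ (b + c) / τ - jointCDF H b c := by
  have hsum := lam_add_jointCDF_of_marginals hτ hmarg1 hmarg2 hb hc
  have hminb : min b τ / τ ≤ b / τ := by gcongr; exact min_le_left _ _
  have hminc : min c τ / τ ≤ c / τ := by gcongr; exact min_le_left _ _
  rw [add_div]
  linarith

lemma lam_zero_right (hτ : 0 < τ) (hmarg1 : H.map Prod.fst = uniformIcc τ)
    (hmarg2 : H.map Prod.snd = uniformIcc τ) {b : ℝ} (hb : 0 ≤ b) (hbτ : b ≤ τ) :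
    Lam b 0 H = b / τ := by
  have hsum := lam_add_jointCDF_of_marginals hτ hmarg1 hmarg2 hb le_rfl
  have hJ := jointCDF_le_snd (G := H) b 0
  rw [measure_preimage_Iic_of_map_eq_uniformIcc measurable_snd hmarg2 hτ le_rfl] at hJ
  rw [min_eq_left hbτ, min_eq_left hτ.le, zero_div] at hsum
  rw [min_eq_left hτ.le, zero_div] at hJ
  linarith [jointCDF_nonneg (G := H) b 0]

lemma lam_zero_left (hτ : 0 < τ) (hmarg1 : H.map Prod.fst = uniformIcc τ)
    (hmarg2 : H.map Prod.snd = uniformIcc τ) {c : ℝ} (hc : 0 ≤ c) (hcτ : c ≤ τ) :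
    Lam 0 c H = c / τ := by
  have hsum := lam_add_jointCDF_of_marginals hτ hmarg1 hmarg2 le_rfl hc
  have hJ := jointCDF_le_fst (G := H) 0 c
  rw [measure_preimage_Iic_of_map_eq_uniformIcc measurable_fst hmarg1 hτ le_rfl] at hJ
  rw [min_eq_left hcτ, min_eq_left hτ.le, zero_div] at hsum
  rw [min_eq_left hτ.le, zero_div] at hJ
  linarith [jointCDF_nonneg (G := H) 0 c]

lemma pay_le (hτ : 0 < τ) (hmarg1 : H.map Prod.fst = uniformIcc τ)
    (hmarg2 : H.map Prod.snd = uniformIcc τ) (d : ℝ) {s : ℝ × ℝ × ℝ} (hs : s ∈ SimplexS) :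
    pay s H d ≤ d + (1 - d) ^ 2 / (4 * τ) := by
  obtain ⟨a, b, c⟩ := s
  obtain ⟨-, hb, hc, hsum⟩ : 0 ≤ a ∧ 0 ≤ b ∧ 0 ≤ c ∧ a + b + c = 1 := hs
  have hL := lam_le hτ hmarg1 hmarg2 hb hc
  have hL' : Lam b c H ≤ (1 - a) / τ := by
    rw [show 1 - a = b + c by linarith]; linarith [jointCDF_nonneg (G := H) b c]
  have := sub_mul_le_of_le_div (d := d) hτ (L := Lam b c H) ENNReal.toReal_nonneg hL'
  change d + (a - d) * Lam b c H ≤ _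
  linarith

lemma eq_of_pay_eq (hτ : 0 < τ) (hmarg1 : H.map Prod.fst = uniformIcc τ)
    (hmarg2 : H.map Prod.snd = uniformIcc τ) (hA1 : ∀ x > (0 : ℝ), 0 < jointCDF H x x)
    {d : ℝ} (hd : d < 1) {s : ℝ × ℝ × ℝ} (hs : s ∈ SimplexS)
    (hpay : pay s H d = d + (1 - d) ^ 2 / (4 * τ)) :
    s = ((1 + d) / 2, (1 - d) / 2, 0) ∨ s = ((1 + d) / 2, 0, (1 - d) / 2) := by
  obtain ⟨a, b, c⟩ := s
  obtain ⟨-, hb, hc, hsum⟩ : 0 ≤ a ∧ 0 ≤ b ∧ 0 ≤ c ∧ a + b + c = 1 := hs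
  have hL := lam_le hτ hmarg1 hmarg2 hb hc
  have hbc : b + c = 1 - a := by linarith
  have hL' : Lam b c H ≤ (1 - a) / τ := by
    rw [← hbc]; linarith [jointCDF_nonneg (G := H) b c]
  change d + (a - d) * Lam b c H = _ at hpay
  obtain ⟨ha, hLeq⟩ := eq_of_sub_mul_eq (L := Lam b c H) hτ hd ENNReal.toReal_nonneg hL'
    (by linarith)
  have hJ : jointCDF H b c ≤ 0 := by rw [← hbc] at hLeq; linarith
  have hbc0 : b = 0 ∨ c = 0 := by
    by_contra! hne
    have hmin : 0 < min b c := lt_min (hb.lt_of_ne' hne.1) (hc.lt_of_ne' hne.2)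
    linarith [hA1 _ hmin, jointCDF_mono (G := H) (min_le_left b c) (min_le_right b c)]
  subst ha
  rcases hbc0 with rfl | rfl
  · right; simp only [Prod.mk.injEq, true_and]; linarith
  · left; simp only [Prod.mk.injEq, true_and, and_true]; linarith

end UniformMarginals

theorem stmt3_general
    (τ : ℝ) (hτ : 1 / 2 ≤ τ)
    (H : Measure (ℝ × ℝ)) (hHprob : IsProbabilityMeasure H)
    (hmarg1 : H.map Prod.fst = uniformIcc τ)
    (hmarg2 : H.map Prod.snd = uniformIcc τ)
    (hA1 : ∀ x > (0 : ℝ), 0 < jointCDF H x x)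
    (d : ℝ) (hd0 : 0 ≤ d) (hd1 : d < 1) :
    {s : ℝ × ℝ × ℝ | s ∈ SimplexS ∧ ∀ s' ∈ SimplexS, pay s' H d ≤ pay s H d} =
      {((1 + d) / 2, (1 - d) / 2, 0), ((1 + d) / 2, 0, (1 - d) / 2)} ∧
    pay ((1 + d) / 2, (1 - d) / 2, 0) H d = d + (1 - d) ^ 2 / (4 * τ) := by
  have hτ0 : 0 < τ := by linarith
  have hS1 : ((1 + d) / 2, (1 - d) / 2, (0 : ℝ)) ∈ SimplexS :=
    ⟨by linarith, by linarith, le_rfl, by ring⟩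
  have hS2 : ((1 + d) / 2, (0 : ℝ), (1 - d) / 2) ∈ SimplexS :=
    ⟨by linarith, le_rfl, by linarith, by ring⟩
  have hpay1 : pay ((1 + d) / 2, (1 - d) / 2, 0) H d = d + (1 - d) ^ 2 / (4 * τ) := by
    rw [pay, lam_zero_right hτ0 hmarg1 hmarg2 (by linarith) (by linarith)]
    field_simp; ring
  have hpay2 : pay ((1 + d) / 2, 0, (1 - d) / 2) H d = d + (1 - d) ^ 2 / (4 * τ) := by
    rw [pay, lam_zero_left hτ0 hmarg1 hmarg2 (by linarith) (by linarith)]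
    field_simp; ring
  refine ⟨Set.Subset.antisymm ?_ ?_, hpay1⟩
  · rintro s ⟨hs, hmax⟩
    exact eq_of_pay_eq hτ0 hmarg1 hmarg2 hA1 hd1 hs
      (le_antisymm (pay_le hτ0 hmarg1 hmarg2 d hs) (hpay1 ▸ hmax _ hS1))
  · rintro s (rfl | rfl)
    · exact ⟨hS1, fun s' hs' => hpay1 ▸ pay_le hτ0 hmarg1 hmarg2 d hs'⟩
    · exact ⟨hS2, fun s' hs' => hpay2 ▸ pay_le hτ0 hmarg1 hmarg2 d hs'⟩

theorem stmt3
    (τ : ℝ) (hτ : 1 / 2 ≤ τ)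
    (H : Measure (ℝ × ℝ)) (hHprob : IsProbabilityMeasure H)
    (hconc : H ((Set.Icc (0 : ℝ) τ ×ˢ Set.Icc (0 : ℝ) τ)ᶜ) = 0)
    (hmarg1 : H.map Prod.fst = uniformIcc τ)
    (hmarg2 : H.map Prod.snd = uniformIcc τ)
    (hA1 : ∀ x > (0 : ℝ), 0 < jointCDF H x x)
    (d : ℝ) (hd0 : 0 ≤ d) (hd1 : d < 1) :
    {s : ℝ × ℝ × ℝ | s ∈ SimplexS ∧ ∀ s' ∈ SimplexS, pay s' H d ≤ pay s H d} =
      {((1 + d) / 2, (1 - d) / 2, 0), ((1 + d) / 2, 0, (1 - d) / 2)} ∧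
    pay ((1 + d) / 2, (1 - d) / 2, 0) H d = d + (1 - d) ^ 2 / (4 * τ) :=
  stmt3_general τ hτ H hHprob hmarg1 hmarg2 hA1 d hd0 hd1
end
end

section
/- Fix d ∈ [0, 1), let (H_n) be Borel probability measures on ℝ² converging weakly to H, and let (d_n) be reals converging to d. Then the optimal value converges: sup_{s ∈ S} π̂(s, H_n, d_n) → sup_{s ∈ S} π̂(s, H, d) as n → ∞ (these suprema are attained, since π̂(·, G, d) is upper semicontinuous on the compact set S). -/
open MeasureTheory Filter

noncomputable section

lemma lam_nonneg (b c : ℝ) (G : Measure (ℝ × ℝ)) : 0 ≤ Lam b c G := ENNReal.toReal_nonneg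

lemma lam_le_one (b c : ℝ) (G : Measure (ℝ × ℝ)) [IsProbabilityMeasure G] : Lam b c G ≤ 1 := by
  have h1 : G {p : ℝ × ℝ | p.1 ≤ b ∨ p.2 ≤ c} ≤ 1 := prob_le_one
  calc Lam b c G ≤ (1 : ENNReal).toReal := ENNReal.toReal_mono ENNReal.one_ne_top h1
    _ = 1 := by simp

lemma lam_mono {b b' c c' : ℝ} (hb : b ≤ b') (hc : c ≤ c') (G : Measure (ℝ × ℝ))
    [IsProbabilityMeasure G] : Lam b c G ≤ Lam b' c' G := by
  refine ENNReal.toReal_mono (measure_ne_top G _) (measure_mono ?_)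
  rintro p (h | h)
  · exact Or.inl (h.trans hb)
  · exact Or.inr (h.trans hc)

lemma simplex_mem_one : ((1 : ℝ), (0 : ℝ), (0 : ℝ)) ∈ SimplexS :=
  ⟨zero_le_one, le_refl 0, le_refl 0, by norm_num⟩

lemma payHat_le (s : ℝ × ℝ × ℝ) (hs : s ∈ SimplexS) (G : Measure (ℝ × ℝ))
    [IsProbabilityMeasure G] (d' : ℝ) : payHat s G d' ≤ max 1 d' := by
  obtain ⟨h1, h2, h3, h4⟩ := hs
  have hs1 : s.1 ≤ 1 := by linarith
  have hl0 := lam_nonneg s.2.1 s.2.2 G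
  have hl1 := lam_le_one s.2.1 s.2.2 G
  have hm : max (s.1 - d') 0 ≤ max (1 - d') 0 := max_le_max (by linarith) le_rfl
  have key : max (s.1 - d') 0 * Lam s.2.1 s.2.2 G ≤ max (1 - d') 0 := by
    calc max (s.1 - d') 0 * Lam s.2.1 s.2.2 G ≤ max (s.1 - d') 0 * 1 :=
          mul_le_mul_of_nonneg_left hl1 (le_max_right _ _)
      _ = max (s.1 - d') 0 := mul_one _
      _ ≤ max (1 - d') 0 := hm
  have : payHat s G d' ≤ d' + max (1 - d') 0 := by
    unfold payHat; linarith
  refine this.trans ?_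
  rcases le_total 1 d' with h | h
  · rw [max_eq_right (by linarith : (1 : ℝ) - d' ≤ 0), max_eq_right h]; linarith
  · rw [max_eq_left (by linarith : (0 : ℝ) ≤ 1 - d'), max_eq_left h]; linarith

lemma bddAbove_payHat (G : Measure (ℝ × ℝ)) [IsProbabilityMeasure G] (d' : ℝ) :
    BddAbove ((fun s => payHat s G d') '' SimplexS) := by
  refine ⟨max 1 d', ?_⟩
  rintro x ⟨s, hs, rfl⟩
  exact payHat_le s hs G d'

lemma d_le_payHat (s : ℝ × ℝ × ℝ) (G : Measure (ℝ × ℝ)) (d' : ℝ) : d' ≤ payHat s G d' :=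
  le_add_of_nonneg_right (mul_nonneg (le_max_right _ _) (lam_nonneg _ _ _))

theorem stmt11
    (τ : ℝ) (hτ : 1 / 2 ≤ τ)
    (H : Measure (ℝ × ℝ)) (hHprob : IsProbabilityMeasure H)
    (hconc : H ((Set.Icc (0 : ℝ) τ ×ˢ Set.Icc (0 : ℝ) τ)ᶜ) = 0)
    (hmarg1 : H.map Prod.fst = uniformIcc τ)
    (hmarg2 : H.map Prod.snd = uniformIcc τ)
    (hA1 : ∀ x > (0 : ℝ), 0 < jointCDF H x x)
    (d : ℝ) (hd0 : 0 ≤ d) (hd1 : d < 1)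
    (Hn : ℕ → Measure (ℝ × ℝ)) (hHnprob : ∀ n, IsProbabilityMeasure (Hn n))
    (hweak : WeakLim Hn H)
    (dn : ℕ → ℝ) (hdn : Tendsto dn atTop (nhds d)) :
    Tendsto (fun n => sSup ((fun s => payHat s (Hn n) (dn n)) '' SimplexS)) atTop
      (nhds (sSup ((fun s => payHat s H d) '' SimplexS))) := by
  haveI := hHprob
  haveI := hHnprob
  -- weak convergence in the space of probability measures
  set pm : ProbabilityMeasure (ℝ × ℝ) := ⟨H, hHprob⟩ with hpm
  set pms : ℕ → ProbabilityMeasure (ℝ × ℝ) := fun n => ⟨Hn n, hHnprob n⟩ with hpms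
  have hpmlim : Tendsto pms atTop (nhds pm) :=
    ProbabilityMeasure.tendsto_iff_forall_integral_tendsto.2 (fun f => hweak f)
  -- the marginals of H are atomless, so vertical/horizontal lines are null
  have hnull1 : ∀ b : ℝ, H {p : ℝ × ℝ | p.1 = b} = 0 := by
    intro b
    have h1 : {p : ℝ × ℝ | p.1 = b} = Prod.fst ⁻¹' {b} := rfl
    rw [h1, ← Measure.map_apply measurable_fst (measurableSet_singleton b), hmarg1, uniformIcc,
      Measure.smul_apply, Measure.restrict_apply (measurableSet_singleton b)]
    have h2 : (volume : Measure ℝ) ({b} ∩ Set.Icc 0 τ) = 0 :=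
      measure_mono_null Set.inter_subset_left (by simp)
    rw [h2, smul_zero]
  have hnull2 : ∀ c : ℝ, H {p : ℝ × ℝ | p.2 = c} = 0 := by
    intro c
    have h1 : {p : ℝ × ℝ | p.2 = c} = Prod.snd ⁻¹' {c} := rfl
    rw [h1, ← Measure.map_apply measurable_snd (measurableSet_singleton c), hmarg2, uniformIcc,
      Measure.smul_apply, Measure.restrict_apply (measurableSet_singleton c)]
    have h2 : (volume : Measure ℝ) ({c} ∩ Set.Icc 0 τ) = 0 :=
      measure_mono_null Set.inter_subset_left (by simp)
    rw [h2, smul_zero]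
  -- portmanteau: Λ(b,c,·) converges at every point
  have hlam : ∀ b c : ℝ, Tendsto (fun n => Lam b c (Hn n)) atTop (nhds (Lam b c H)) := by
    intro b c
    have hopen : IsOpen {p : ℝ × ℝ | p.1 < b ∨ p.2 < c} :=
      (isOpen_lt continuous_fst continuous_const).union (isOpen_lt continuous_snd continuous_const)
    have hclosed : IsClosed {p : ℝ × ℝ | p.1 ≤ b ∨ p.2 ≤ c} :=
      (isClosed_le continuous_fst continuous_const).union
        (isClosed_le continuous_snd continuous_const)
    have hsub : frontier {p : ℝ × ℝ | p.1 ≤ b ∨ p.2 ≤ c} ⊆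
        {p : ℝ × ℝ | p.1 = b} ∪ {p : ℝ × ℝ | p.2 = c} := by
      intro p hp
      rw [frontier, hclosed.closure_eq] at hp
      obtain ⟨hpU, hpI⟩ := hp
      have hnot : ¬(p.1 < b ∨ p.2 < c) := fun h =>
        hpI (interior_maximal (fun q hq => hq.imp le_of_lt le_of_lt) hopen h)
      push_neg at hnot
      rcases hpU with h | h
      · exact Or.inl (le_antisymm h hnot.1)
      · exact Or.inr (le_antisymm h hnot.2)
    have hfr : H (frontier {p : ℝ × ℝ | p.1 ≤ b ∨ p.2 ≤ c}) = 0 :=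
      measure_mono_null hsub (measure_union_null (hnull1 b) (hnull2 c))
    have key := ProbabilityMeasure.tendsto_measure_of_null_frontier_of_tendsto' hpmlim
      (E := {p : ℝ × ℝ | p.1 ≤ b ∨ p.2 ≤ c}) hfr
    exact (ENNReal.tendsto_toReal (measure_ne_top H _)).comp key
  -- convergence of payoff at fixed offers
  have hpayt : ∀ s : ℝ × ℝ × ℝ,
      Tendsto (fun n => payHat s (Hn n) (dn n)) atTop (nhds (payHat s H d)) := by
    intro s
    simp only [payHat]
    exact hdn.add ((((tendsto_const_nhds.sub hdn).max tendsto_const_nhds).mul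
      (hlam s.2.1 s.2.2)))
  have hne : ((fun s => payHat s H d) '' SimplexS).Nonempty :=
    ⟨_, ⟨_, simplex_mem_one, rfl⟩⟩
  set V := sSup ((fun s => payHat s H d) '' SimplexS) with hV
  refine tendsto_order.2 ⟨?_, ?_⟩
  · -- lower bound
    intro a ha
    obtain ⟨x, ⟨s, hs, rfl⟩, hax⟩ := exists_lt_of_lt_csSup hne ha
    filter_upwards [(hpayt s).eventually (eventually_gt_nhds hax)] with n hn
    exact lt_of_lt_of_le hn (le_csSup (bddAbove_payHat (Hn n) (dn n)) ⟨s, hs, rfl⟩)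
  · -- upper bound
    intro a ha
    set δ : ℝ := (a - V) / 4 with hδdef
    have hδ : 0 < δ := by rw [hδdef]; linarith
    set N : ℕ := ⌈1 / δ⌉₊ with hN
    have hround : ∀ x : ℝ, 0 ≤ x → x ≤ 1 →
        x ≤ (⌈x / δ⌉₊ : ℝ) * δ ∧ (⌈x / δ⌉₊ : ℝ) * δ ≤ x + δ ∧ ⌈x / δ⌉₊ ≤ N := by
      intro x hx0 hx1
      have h1 : x / δ ≤ (⌈x / δ⌉₊ : ℝ) := Nat.le_ceil _
      have h2 : ((⌈x / δ⌉₊ : ℝ)) < x / δ + 1 := Nat.ceil_lt_add_one (by positivity)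
      have hx : x = (x / δ) * δ := by field_simp
      refine ⟨by nlinarith, by nlinarith, Nat.ceil_le_ceil (by gcongr)⟩
    set gl : ℕ → ℕ → ℝ := fun i j =>
      d + max (1 - i * δ - j * δ + 2 * δ - d) 0 * Lam (i * δ) (j * δ) H with hgl
    have hdV : d ≤ V :=
      le_trans (d_le_payHat (1, 0, 0) H d) (le_csSup (bddAbove_payHat H d)
        ⟨_, simplex_mem_one, rfl⟩)
    have hB : ∀ i j : ℕ, gl i j ≤ V + 2 * δ := by
      intro i j
      have hl0 := lam_nonneg ((i : ℝ) * δ) ((j : ℝ) * δ) H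
      have hl1 := lam_le_one ((i : ℝ) * δ) ((j : ℝ) * δ) H
      rcases le_or_gt ((i : ℝ) * δ + (j : ℝ) * δ) 1 with hle | hgt
      · set s' : ℝ × ℝ × ℝ := (1 - i * δ - j * δ, i * δ, j * δ) with hs'def
        have hs' : s' ∈ SimplexS := ⟨by simp [hs'def]; linarith, by positivity, by positivity,
          by simp [hs'def]; ring⟩
        have hV' : payHat s' H d ≤ V := le_csSup (bddAbove_payHat H d) ⟨s', hs', rfl⟩
        have hm : max (1 - i * δ - j * δ + 2 * δ - d) 0 ≤
            max (1 - i * δ - j * δ - d) 0 + 2 * δ :=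
          max_le (by linarith [le_max_left (1 - (i : ℝ) * δ - j * δ - d) (0 : ℝ)])
            (by linarith [le_max_right (1 - (i : ℝ) * δ - j * δ - d) (0 : ℝ)])
        have hpay : payHat s' H d = d + max (1 - i * δ - j * δ - d) 0 * Lam (i * δ) (j * δ) H :=
          rfl
        simp only [hgl]
        nlinarith [mul_le_mul_of_nonneg_right hm hl0,
          le_max_right (1 - (i : ℝ) * δ - (j : ℝ) * δ - d) (0 : ℝ)]
      · have hm : max (1 - i * δ - j * δ + 2 * δ - d) 0 ≤ 2 * δ :=
          max_le (by linarith) (by linarith)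
        simp only [hgl]
        nlinarith [mul_le_mul_of_nonneg_right hm hl0]
    have hC : ∀ i j : ℕ,
        Tendsto (fun n => dn n + max (1 - i * δ - j * δ + 2 * δ - dn n) 0 *
          Lam (i * δ) (j * δ) (Hn n)) atTop (nhds (gl i j)) := fun i j =>
      hdn.add (((tendsto_const_nhds.sub hdn).max tendsto_const_nhds).mul (hlam _ _))
    have hev : ∀ᶠ n in atTop, ∀ i ∈ Finset.range (N + 1), ∀ j ∈ Finset.range (N + 1),
        dn n + max (1 - i * δ - j * δ + 2 * δ - dn n) 0 * Lam (i * δ) (j * δ) (Hn n)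
          < V + 3 * δ := by
      rw [eventually_all_finset]
      intro i _
      rw [eventually_all_finset]
      intro j _
      exact (hC i j).eventually (eventually_lt_nhds (lt_of_le_of_lt (hB i j) (by linarith)))
    filter_upwards [hev] with n hn
    have hsup : sSup ((fun s => payHat s (Hn n) (dn n)) '' SimplexS) ≤ V + 3 * δ := by
      refine csSup_le ⟨payHat (1, 0, 0) (Hn n) (dn n), ⟨(1, 0, 0), simplex_mem_one, rfl⟩⟩ ?_
      rintro x ⟨s, hs, rfl⟩
      obtain ⟨h1, h2, h3, h4⟩ := hs
      obtain ⟨hb1, hb2, hb3⟩ := hround s.2.1 h2 (by linarith)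
      obtain ⟨hc1, hc2, hc3⟩ := hround s.2.2 h3 (by linarith)
      have key := hn _ (Finset.mem_range.2 (Nat.lt_succ_of_le hb3)) _
        (Finset.mem_range.2 (Nat.lt_succ_of_le hc3))
      refine le_of_lt (lt_of_le_of_lt ?_ key)
      have hmono := lam_mono hb1 hc1 (Hn n)
      have hmax : max (s.1 - dn n) 0 ≤
          max (1 - (⌈s.2.1 / δ⌉₊ : ℝ) * δ - (⌈s.2.2 / δ⌉₊ : ℝ) * δ + 2 * δ - dn n) 0 :=
        max_le_max (by linarith) le_rfl
      have hmul := mul_le_mul hmax hmono (lam_nonneg _ _ _) (le_max_right _ _)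
      unfold payHat
      linarith
    have : V + 3 * δ < a := by rw [hδdef]; linarith
    linarith
end
end
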